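/- arXiv:1611.08895 — 2 statements merged into one kernel-verified Lean document; each statement's English description precedes it below -/
import Mathlib

section
/- (Lemma 1.) Let k ≥ 10 be a natural number and set N = ⌈k/φ⌉. Then for every n ≥ N and all indices 1 ≤ i ≤ j ≤ n with i ≥ ⌈n/2⌉, it holds that |(T^{-1})_{ij} − (−1)^{i+j} (1/τ) (r_+^{i−j} − r_+^{−2(n+1)+i+j})| < 3 / (|τ| · 2^k). -/
/-- The `n × n` symmetric tridiagonal Toeplitz matrix with diagonal `a` and
off-diagonals `b` (0-based `Fin n` indexing of the 1-based matrix). -/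
def tridiagToeplitz (n : ℕ) (a b : ℝ) : Matrix (Fin n) (Fin n) ℝ :=
  Matrix.of fun i j =>
    if (i : ℕ) = (j : ℕ) then a
    else if (i : ℕ) + 1 = (j : ℕ) ∨ (j : ℕ) + 1 = (i : ℕ) then b
    else 0


noncomputable def ff (r : ℝ) (m : ℤ) : ℝ := r ^ m - r ^ (-m)

lemma ff_zero (r : ℝ) : ff r 0 = 0 := by simp [ff]

lemma ff_rec {r : ℝ} (hr : r ≠ 0) {a b : ℝ} (hab : a = b * (r + r⁻¹)) (m : ℤ) :
    a * ff r m = b * (ff r (m + 1) + ff r (m - 1)) := by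
  subst hab
  simp only [ff]
  rw [show -(m + 1) = -m - 1 by ring, show -(m - 1) = -m + 1 by ring,
    zpow_add_one₀ hr, zpow_sub_one₀ hr, zpow_sub_one₀ hr, zpow_add_one₀ hr]
  field_simp
  ring

lemma ff_mul {r : ℝ} (hr : r ≠ 0) (m p : ℤ) :
    ff r (m + 1) * ff r p - ff r m * ff r (p - 1) = ff r 1 * ff r (m + p) := by
  have h1 : r ^ m ≠ 0 := zpow_ne_zero _ hr
  have h2 : r ^ p ≠ 0 := zpow_ne_zero _ hr
  simp only [ff]
  rw [show -(m + 1) = -m - 1 by ring, show -(p - 1) = -p + 1 by ring,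
    show -(m + p) = -m + -p by ring,
    zpow_add_one₀ hr, zpow_sub_one₀ hr, zpow_sub_one₀ hr, zpow_add_one₀ hr,
    zpow_add₀ hr m p, zpow_add₀ hr (-m) (-p), zpow_neg, zpow_neg, zpow_one]
  field_simp
  ring

lemma neg_one_zpow_succ (t : ℤ) : (-1 : ℝ) ^ (t + 1) = -((-1 : ℝ) ^ t) := by
  rw [zpow_add_one₀ (by norm_num : (-1:ℝ) ≠ 0)]; ring

lemma threeterm {r : ℝ} (hr : r ≠ 0) {a b : ℝ} (hab : a = b * (r + r⁻¹))
    (n l : ℤ) (m : ℤ) :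
    a * ((-1:ℝ) ^ (m + l) * ff r (min m l + 1) * ff r (n - max m l))
      + b * ((-1:ℝ) ^ (m - 1 + l) * ff r (min (m - 1) l + 1) * ff r (n - max (m - 1) l))
      + b * ((-1:ℝ) ^ (m + 1 + l) * ff r (min (m + 1) l + 1) * ff r (n - max (m + 1) l))
      = if m = l then b * ff r 1 * ff r (n + 1) else 0 := by
  have hsplus : ∀ t : ℤ, (-1 : ℝ) ^ (t + 1) = -((-1 : ℝ) ^ t) := neg_one_zpow_succ
  have hsm : (-1:ℝ) ^ (m - 1 + l) = -((-1:ℝ) ^ (m + l)) := by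
    rw [show m + l = (m - 1 + l) + 1 by ring, hsplus]; ring
  have hsp : (-1:ℝ) ^ (m + 1 + l) = -((-1:ℝ) ^ (m + l)) := by
    rw [show m + 1 + l = (m + l) + 1 by ring, hsplus]
  rcases lt_trichotomy m l with h | h | h
  · rw [if_neg (by omega), min_eq_left (by omega), max_eq_right (by omega),
      min_eq_left (by omega), max_eq_right (by omega),
      min_eq_left (by omega), max_eq_right (by omega), hsm, hsp]
    have hrec := ff_rec hr hab (m + 1)
    rw [show m + 1 - 1 = m by ring] at hrec
    rw [show m - 1 + 1 = m by ring]
    linear_combination ((-1:ℝ) ^ (m + l) * ff r (n - l)) * hrec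
  · subst h
    rw [if_pos rfl, min_self, max_self, min_eq_left (by omega), max_eq_right (by omega),
      min_eq_right (by omega), max_eq_left (by omega), hsm, hsp]
    have hone : (-1:ℝ) ^ (m + m) = 1 := by
      rw [show m + m = 2 * m by ring, zpow_mul]; norm_num
    have hrec := ff_rec hr hab (m + 1)
    rw [show m + 1 - 1 = m by ring] at hrec
    have hmul := ff_mul hr (m + 1) (n - m)
    rw [show m + 1 + (n - m) = n + 1 by ring, show n - m - 1 = n - (m + 1) by ring] at hmul
    rw [hone, show m - 1 + 1 = m by ring]
    linear_combination ff r (n - m) * hrec + b * hmul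
  · rw [if_neg (by omega), min_eq_right (by omega), max_eq_left (by omega),
      min_eq_right (by omega), max_eq_left (by omega),
      min_eq_right (by omega), max_eq_left (by omega), hsm, hsp]
    have hrec := ff_rec hr hab (n - m)
    rw [show n - m + 1 = n - (m - 1) by ring, show n - m - 1 = n - (m + 1) by ring] at hrec
    linear_combination ((-1:ℝ) ^ (m + l) * ff r (l + 1)) * hrec


noncomputable def Minv (n : ℕ) (r b : ℝ) : Matrix (Fin n) (Fin n) ℝ :=
  Matrix.of fun i j =>
    (-1:ℝ) ^ ((i : ℤ) + (j : ℤ)) * ff r (min (i : ℤ) (j : ℤ) + 1)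
      * ff r ((n : ℤ) - max (i : ℤ) (j : ℤ)) / (b * ff r 1 * ff r ((n : ℤ) + 1))

lemma T_mul_Minv {n : ℕ} {a b r : ℝ} (hr : r ≠ 0) (hab : a = b * (r + r⁻¹))
    (hd : b * ff r 1 * ff r ((n : ℤ) + 1) ≠ 0) :
    tridiagToeplitz n a b * Minv n r b = 1 := by
  ext i l
  rw [Matrix.mul_apply]
  set c : ℝ := b * ff r 1 * ff r ((n : ℤ) + 1) with hc
  set G : ℤ → ℝ := fun m =>
    (-1:ℝ) ^ (m + (l : ℤ)) * ff r (min m (l : ℤ) + 1) * ff r ((n : ℤ) - max m (l : ℤ)) with hG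
  have hln : (l : ℤ) < (n : ℤ) := by exact_mod_cast l.isLt
  have hGn : G (n : ℤ) = 0 := by
    simp only [hG]
    rw [max_eq_left hln.le, sub_self]
    simp [ff]
  have hGneg : G (-1) = 0 := by
    simp only [hG]
    rw [min_eq_left (by omega)]
    norm_num [ff]
  have hterm : ∀ j : Fin n,
      tridiagToeplitz n a b i j * Minv n r b j l
        = ((if (j : ℕ) = (i : ℕ) then a * (G (i : ℤ) / c) else 0)
          + (if (j : ℕ) = (i : ℕ) + 1 then b * (G ((i : ℤ) + 1) / c) else 0))
          + (if (j : ℕ) + 1 = (i : ℕ) then b * (G ((i : ℤ) - 1) / c) else 0) := by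
    intro j
    have hMj : Minv n r b j l = G (j : ℤ) / c := by
      simp only [Minv, Matrix.of_apply, hG, hc, mul_div_assoc]
    rw [hMj]
    simp only [tridiagToeplitz, Matrix.of_apply]
    by_cases h1 : (i : ℕ) = (j : ℕ)
    · rw [if_pos h1]
      have hij : ((j : Fin n) : ℤ) = ((i : Fin n) : ℤ) := by omega
      rw [if_pos h1.symm, if_neg (show ¬(j:ℕ) = (i:ℕ)+1 by omega),
        if_neg (show ¬(j:ℕ)+1 = (i:ℕ) by omega), hij]
      ring
    · rw [if_neg h1]
      by_cases h2 : (i : ℕ) + 1 = (j : ℕ)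
      · rw [if_pos (Or.inl h2)]
        have hij : ((j : Fin n) : ℤ) = ((i : Fin n) : ℤ) + 1 := by omega
        rw [if_neg (show ¬(j:ℕ) = (i:ℕ) by omega), if_pos h2.symm,
          if_neg (show ¬(j:ℕ)+1 = (i:ℕ) by omega), hij]
        ring
      · by_cases h3 : (j : ℕ) + 1 = (i : ℕ)
        · rw [if_pos (Or.inr h3)]
          have hij : ((j : Fin n) : ℤ) = ((i : Fin n) : ℤ) - 1 := by omega
          rw [if_neg (show ¬(j:ℕ) = (i:ℕ) by omega),
            if_neg (show ¬(j:ℕ) = (i:ℕ)+1 by omega), if_pos h3, hij]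
          ring
        · rw [if_neg (show ¬((i:ℕ)+1 = (j:ℕ) ∨ (j:ℕ)+1 = (i:ℕ)) from by tauto),
            if_neg (show ¬(j:ℕ) = (i:ℕ) by omega),
            if_neg (show ¬(j:ℕ) = (i:ℕ)+1 by omega), if_neg h3]
          ring
  calc ∑ j : Fin n, tridiagToeplitz n a b i j * Minv n r b j l
      = ∑ t ∈ Finset.range n, (((if t = (i:ℕ) then a * (G ((i:ℕ):ℤ) / c) else 0)
          + (if t = (i:ℕ) + 1 then b * (G (((i:ℕ):ℤ) + 1) / c) else 0))
          + (if t + 1 = (i:ℕ) then b * (G (((i:ℕ):ℤ) - 1) / c) else 0)) := by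
        rw [← Fin.sum_univ_eq_sum_range]
        exact Finset.sum_congr rfl fun j _ => hterm j
    _ = (1 : Matrix (Fin n) (Fin n) ℝ) i l := by
        rw [Finset.sum_add_distrib, Finset.sum_add_distrib]
        have s1 : ∑ t ∈ Finset.range n, (if t = (i:ℕ) then a * (G ((i:ℕ):ℤ) / c) else 0)
            = a * (G ((i:ℕ):ℤ) / c) := by
          rw [Finset.sum_ite_eq' (Finset.range n), if_pos (Finset.mem_range.2 i.isLt)]
        have s2 : ∑ t ∈ Finset.range n, (if t = (i:ℕ) + 1 then b * (G (((i:ℕ):ℤ) + 1) / c) else 0)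
            = b * (G (((i:ℕ):ℤ) + 1) / c) := by
          rw [Finset.sum_ite_eq' (Finset.range n)]
          by_cases h : (i:ℕ) + 1 ∈ Finset.range n
          · rw [if_pos h]
          · rw [if_neg h]
            have hni : ((i:ℕ):ℤ) + 1 = (n:ℤ) := by
              simp only [Finset.mem_range] at h
              have := i.isLt
              omega
            rw [hni, hGn]; simp
        have s3 : ∑ t ∈ Finset.range n, (if t + 1 = (i:ℕ) then b * (G (((i:ℕ):ℤ) - 1) / c) else 0)
            = b * (G (((i:ℕ):ℤ) - 1) / c) := by
          rcases Nat.eq_zero_or_pos (i:ℕ) with h | h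
          · rw [Finset.sum_eq_zero (fun t _ => if_neg (by omega))]
            have : ((i:ℕ):ℤ) - 1 = -1 := by omega
            rw [this, hGneg]; simp
          · have hcond : ∀ t : ℕ, (t + 1 = (i:ℕ)) = (t = (i:ℕ) - 1) := fun t => by
              apply propext; omega
            simp_rw [hcond]
            rw [Finset.sum_ite_eq' (Finset.range n),
              if_pos (Finset.mem_range.2 (by have := i.isLt; omega))]
        rw [s1, s2, s3]
        have key : a * G ((i:ℕ):ℤ) + b * G (((i:ℕ):ℤ) - 1) + b * G (((i:ℕ):ℤ) + 1)
            = if ((i:ℕ):ℤ) = ((l:ℕ):ℤ) then c else 0 :=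
          threeterm hr hab (n:ℤ) ((l:ℕ):ℤ) ((i:ℕ):ℤ)
        have hcc : c * c⁻¹ = 1 := mul_inv_cancel₀ hd
        by_cases h : ((i:ℕ):ℤ) = ((l:ℕ):ℤ)
        · rw [if_pos h] at key
          have hil : i = l := Fin.ext (by exact_mod_cast h)
          rw [Matrix.one_apply, if_pos hil]
          linear_combination key / c + hcc
        · rw [if_neg h] at key
          have hil : i ≠ l := fun hh => h (by rw [hh])
          rw [Matrix.one_apply, if_neg hil]
          linear_combination key / c

lemma expand1 {r : ℝ} (hr : r ≠ 0) (I J Nz : ℤ) :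
    ff r (I + 1) * ff r (Nz - J)
      = r ^ (Nz + 1) * ((r ^ (I - J) - r ^ (I + J - 2 * Nz))
          - (r ^ (-(I + J) - 2) - r ^ (J - I - 2 * Nz - 2))) := by
  have h1 : r ^ I ≠ 0 := zpow_ne_zero _ hr
  have h2 : r ^ J ≠ 0 := zpow_ne_zero _ hr
  have h3 : r ^ Nz ≠ 0 := zpow_ne_zero _ hr
  simp only [ff]
  rw [show I + J - 2 * Nz = I + J - Nz - Nz by ring,
    show -(I + J) - 2 = -(I + J) - 1 - 1 by ring,
    show J - I - 2 * Nz - 2 = J - I - Nz - Nz - 1 - 1 by ring,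
    show -(I + 1) = -I - 1 by ring, show -(Nz - J) = J - Nz by ring]
  simp only [zpow_sub₀ hr, zpow_add₀ hr, zpow_neg, zpow_one]
  field_simp

lemma expand2 {r : ℝ} (hr : r ≠ 0) (Nz : ℤ) :
    ff r (Nz + 1) = r ^ (Nz + 1) * (1 - r ^ (-2 * (Nz + 1))) := by
  have h : r ^ (-(Nz + 1)) = r ^ (Nz + 1) * r ^ (-2 * (Nz + 1)) := by
    rw [← zpow_add₀ hr]; congr 1; ring
  simp only [ff]
  rw [h]; ring


set_option maxHeartbeats 1000000 in
/-- Lemma 1: for `k ≥ 10`, `N = ⌈k/φ⌉`, all `n ≥ N` and all 1-based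
indices `i ≤ j` with `i ≥ ⌈n/2⌉` (entry `(i, j)` of `T⁻¹` corresponds to the 1-based
entry `(i+1, j+1)`), the inverse entry is approximated by the simplified term with
error `< 3/(|τ|·2^k)`. -/
theorem lemma_one (a b : ℝ) (hb : b ≠ 0) (hab : 2 * |b| < |a|)
    (x : ℝ) (hx : x = a / (2 * b))
    (rp rm : ℝ)
    (hrp : rp = x + Real.sqrt (x ^ 2 - 1) ∨ rp = x - Real.sqrt (x ^ 2 - 1))
    (hrm : rm = x + Real.sqrt (x ^ 2 - 1) ∨ rm = x - Real.sqrt (x ^ 2 - 1))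
    (hne : rp ≠ rm) (habs : 1 < |rp|)
    (τ : ℝ) (hτ : τ = b * (rp - rm))
    (φ : ℝ) (hφ : φ = Real.logb 2 |rp|)
    (k : ℕ) (hk : 10 ≤ k) (N : ℕ) (hN : N = ⌈(k : ℝ) / φ⌉₊) :
    ∀ n : ℕ, N ≤ n →
      ∀ (T : Matrix (Fin n) (Fin n) ℝ), T = tridiagToeplitz n a b →
        ∀ i j : Fin n, (i : ℕ) ≤ (j : ℕ) → ⌈(n : ℝ) / 2⌉₊ ≤ (i : ℕ) + 1 →
          |T⁻¹ i j -
              (-1 : ℝ) ^ (((i : ℕ) + 1) + ((j : ℕ) + 1)) * (1 / τ) *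
                (rp ^ (((i : ℕ) + 1 : ℤ) - ((j : ℕ) + 1))
                  - rp ^ (-2 * ((n : ℤ) + 1) + ((i : ℕ) + 1) + ((j : ℕ) + 1)))|
            < 3 / (|τ| * 2 ^ k) := by
  intro n hn T hT i j hij hin
  subst hT
  have hb0 : (0:ℝ) < |b| := abs_pos.mpr hb
  have hxabs : 1 < |x| := by
    rw [hx, abs_div, abs_mul, abs_two, lt_div_iff₀ (by positivity)]
    linarith
  have hx2 : 1 < x ^ 2 := by nlinarith [sq_abs x, abs_nonneg x]
  have hs2 : Real.sqrt (x ^ 2 - 1) ^ 2 = x ^ 2 - 1 := Real.sq_sqrt (by linarith)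
  have hprod : rp * rm = 1 := by
    rcases hrp with h1 | h1 <;> rcases hrm with h2 | h2
    · exact absurd (h1.trans h2.symm) hne
    · rw [h1, h2]; linear_combination -hs2
    · rw [h1, h2]; linear_combination -hs2
    · exact absurd (h1.trans h2.symm) hne
  have hr0 : rp ≠ 0 := by intro h; rw [h] at habs; norm_num at habs
  have hrm_eq : rm = rp⁻¹ := eq_inv_of_mul_eq_one_right hprod
  have hsum : rp + rm = 2 * x := by
    rcases hrp with h1 | h1 <;> rcases hrm with h2 | h2
    · exact absurd (h1.trans h2.symm) hne
    · rw [h1, h2]; ring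
    · rw [h1, h2]; ring
    · exact absurd (h1.trans h2.symm) hne
  have hab' : a = b * (rp + rp⁻¹) := by
    rw [← hrm_eq, hsum, hx]; field_simp
  have hff1 : ff rp 1 = rp - rp⁻¹ := by
    simp [ff, zpow_one]
  have hrinv_lt : |rp⁻¹| < 1 := by
    rw [abs_inv]; exact inv_lt_one_of_one_lt₀ habs
  have hf1 : ff rp 1 ≠ 0 := by
    rw [hff1]; intro h
    have h2 : rp = rp⁻¹ := sub_eq_zero.mp h
    rw [h2] at habs; linarith
  have hτ' : τ = b * ff rp 1 := by rw [hτ, hrm_eq, hff1]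
  have hτ0 : τ ≠ 0 := hτ' ▸ mul_ne_zero hb hf1
  set R := |rp| with hRdef
  have hR1 : 1 < R := habs
  have hR0 : (0:ℝ) < R := lt_trans one_pos hR1
  have hφpos : 0 < φ := by rw [hφ]; exact Real.logb_pos one_lt_two hR1
  have hkn : (k:ℝ) ≤ (n:ℝ) * φ := by
    have h1 : ((k:ℝ)/φ) ≤ (N:ℝ) := by rw [hN]; exact Nat.le_ceil _
    have h2 : (N:ℝ) ≤ (n:ℝ) := by exact_mod_cast hn
    rw [div_le_iff₀ hφpos] at h1
    nlinarith
  have hRn : (2:ℝ)^k ≤ R ^ n := by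
    have h2φ : (2:ℝ) ^ φ = R := by rw [hφ]; exact Real.rpow_logb two_pos (by norm_num) hR0
    calc (2:ℝ)^k = (2:ℝ)^(k:ℝ) := by rw [Real.rpow_natCast]
    _ ≤ (2:ℝ)^((n:ℝ)*φ) := (Real.rpow_le_rpow_left_iff one_lt_two).mpr hkn
    _ = ((2:ℝ)^φ)^(n:ℝ) := by rw [mul_comm, Real.rpow_mul (by norm_num)]
    _ = R ^ n := by rw [h2φ, Real.rpow_natCast]
  set t : ℝ := ((2:ℝ)^k)⁻¹ with ht
  have ht0 : 0 < t := by positivity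
  have ht10 : t ≤ 1/1024 := by
    rw [ht, show (1:ℝ)/1024 = ((2:ℝ)^10)⁻¹ by norm_num]
    exact inv_anti₀ (by positivity) (pow_le_pow_right₀ (by norm_num) hk)
  have habs_z : ∀ m : ℤ, |rp ^ m| = R ^ m := fun m => map_zpow₀ (absHom : ℝ →*₀ ℝ) rp m
  have hmono : ∀ {s u : ℤ}, s ≤ u → R ^ s ≤ R ^ u := fun h => zpow_le_zpow_right₀ hR1.le h
  set I : ℤ := ((i:ℕ):ℤ) with hIdef
  set J : ℤ := ((j:ℕ):ℤ) with hJdef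
  set Nz : ℤ := ((n:ℕ):ℤ) with hNdef
  have hIJ : I ≤ J := by rw [hIdef, hJdef]; exact_mod_cast hij
  have hJN : J < Nz := by rw [hJdef, hNdef]; exact_mod_cast j.isLt
  have hI0 : 0 ≤ I := by rw [hIdef]; exact Int.natCast_nonneg _
  have hIl : Nz ≤ 2*I + 2 := by
    have h1 : (n:ℝ)/2 ≤ (⌈(n:ℝ)/2⌉₊ : ℝ) := Nat.le_ceil _
    have h2 : ((⌈(n:ℝ)/2⌉₊ : ℕ):ℝ) ≤ ((i:ℕ):ℝ) + 1 := by exact_mod_cast hin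
    have h3 : (n:ℝ) ≤ 2*((i:ℕ):ℝ) + 2 := by linarith
    rw [hIdef, hNdef]; exact_mod_cast h3
  have hRNz : R ^ (-Nz) ≤ t := by
    rw [zpow_neg, ht, hNdef, zpow_natCast]
    exact inv_anti₀ (by positivity) hRn
  have hRNz0 : 0 < R ^ (-Nz) := zpow_pos hR0 _
  set ε : ℝ := rp ^ (-2*(Nz+1)) with hεdef
  have hεabs : |ε| = R ^ (-2*(Nz+1)) := habs_z _
  have hεt : |ε| ≤ t*t := by
    rw [hεabs]
    calc R ^ (-2*(Nz+1)) ≤ R ^ ((-Nz) + (-Nz)) := hmono (by omega)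
    _ = R^(-Nz) * R^(-Nz) := zpow_add₀ (ne_of_gt hR0) _ _
    _ ≤ t * t := mul_le_mul hRNz hRNz hRNz0.le ht0.le
  have hεhalf : |ε| < 1/2 := by
    have h1 : t*t ≤ (1/1024)*(1/1024) := mul_le_mul ht10 ht10 ht0.le (by norm_num)
    linarith
  have hfn1 : ff rp (Nz+1) = rp^(Nz+1) * (1-ε) := expand2 hr0 Nz
  have h1ε : (1:ℝ) - ε ≠ 0 := by
    intro h
    have : ε = 1 := by linarith
    rw [this] at hεhalf; norm_num at hεhalf
  have hfn0 : ff rp (Nz+1) ≠ 0 := by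
    rw [hfn1]; exact mul_ne_zero (zpow_ne_zero _ hr0) h1ε
  have hd : b * ff rp 1 * ff rp (Nz + 1) ≠ 0 := mul_ne_zero (mul_ne_zero hb hf1) hfn0
  have hinv : (tridiagToeplitz n a b)⁻¹ = Minv n rp b :=
    Matrix.inv_eq_right_inv (T_mul_Minv hr0 hab' hd)
  rw [hinv]
  have hentry : Minv n rp b i j
      = (-1:ℝ)^(I+J) * ff rp (I+1) * ff rp (Nz - J) / (b * ff rp 1 * ff rp (Nz+1)) := by
    simp only [Minv, Matrix.of_apply]
    rw [← hIdef, ← hJdef, ← hNdef, min_eq_left hIJ, max_eq_right hIJ]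
  set sgn : ℝ := (-1:ℝ)^(I+J) with hsgndef
  set P : ℝ := rp^(I-J) - rp^(I+J-2*Nz) with hPdef
  set Q : ℝ := rp^(-(I+J)-2) - rp^(J-I-2*Nz-2) with hQdef
  have hexp : ff rp (I+1) * ff rp (Nz-J) = rp^(Nz+1) * (P - Q) := expand1 hr0 I J Nz
  have hsgn : (-1:ℝ) ^ (((i:ℕ)+1) + ((j:ℕ)+1)) = sgn := by
    rw [show ((i:ℕ)+1) + ((j:ℕ)+1) = ((i:ℕ)+(j:ℕ)) + 2 by ring, pow_add]
    rw [hsgndef, ← zpow_natCast (-1:ℝ) ((i:ℕ)+(j:ℕ))]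
    push_cast
    ring
  have he1 : (((i : ℕ) + 1 : ℤ) - ((j : ℕ) + 1)) = I - J := by push_cast; ring
  have he2 : (-2 * ((n : ℤ) + 1) + ((i : ℕ) + 1) + ((j : ℕ) + 1)) = I + J - 2*Nz := by
    push_cast; rw [← hIdef, ← hJdef, ← hNdef]; ring
  rw [hentry, hsgn, he1, he2, ← hPdef]
  have hdiff : sgn * ff rp (I+1) * ff rp (Nz-J) / (b * ff rp 1 * ff rp (Nz+1))
        - sgn * (1/τ) * P
      = sgn * ((P * ε - Q)/(1-ε)) / τ := by
    rw [hτ', mul_assoc sgn, hexp, hfn1]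
    have hz : rp^(Nz+1) ≠ 0 := zpow_ne_zero _ hr0
    field_simp
    ring
  rw [hdiff, abs_div, abs_mul, abs_div]
  have hsgn1 : |sgn| = 1 := by
    rw [hsgndef]
    have h2 : ((-1:ℝ)^(I+J)) * ((-1:ℝ)^(I+J)) = 1 := by
      rw [← zpow_add₀ (by norm_num : (-1:ℝ) ≠ 0), show (I+J) + (I+J) = 2*(I+J) by ring,
        zpow_mul]
      norm_num
    rcases mul_self_eq_one_iff.mp h2 with h | h <;> rw [h] <;> norm_num
  rw [hsgn1, one_mul]
  have hone : ∀ m : ℤ, m ≤ 0 → |rp ^ m| ≤ 1 := by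
    intro m hm
    rw [habs_z]
    calc R ^ m ≤ R ^ (0:ℤ) := hmono hm
    _ = 1 := zpow_zero R
  have hsmall : ∀ m : ℤ, m ≤ -Nz → |rp ^ m| ≤ t := by
    intro m hm
    rw [habs_z]
    exact le_trans (hmono hm) hRNz
  have hPb : |P| ≤ 2 := by
    calc |P| ≤ |rp^(I-J)| + |rp^(I+J-2*Nz)| := abs_sub _ _
    _ ≤ 1 + 1 := add_le_add (hone _ (by omega)) (hone _ (by omega))
    _ = 2 := by norm_num
  have hQb : |Q| ≤ 2*t := by
    calc |Q| ≤ |rp^(-(I+J)-2)| + |rp^(J-I-2*Nz-2)| := abs_sub _ _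
    _ ≤ t + t := add_le_add (hsmall _ (by omega)) (hsmall _ (by omega))
    _ = 2*t := by ring
  have hnum : |P * ε - Q| ≤ 2*(t*t) + 2*t := by
    calc |P * ε - Q| ≤ |P * ε| + |Q| := abs_sub _ _
    _ = |P| * |ε| + |Q| := by rw [abs_mul]
    _ ≤ 2*(t*t) + 2*t := by
      have h1 : |P| * |ε| ≤ 2*(t*t) := mul_le_mul hPb hεt (abs_nonneg _) (by norm_num)
      linarith only [h1, hQb]
  have hden : 1 - t*t ≤ |1 - ε| := by
    have h1 : |(1:ℝ)| - |ε| ≤ |1 - ε| := abs_sub_abs_le_abs_sub 1 ε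
    rw [abs_one] at h1
    linarith
  have htt : t*t ≤ (1/1024)*(1/1024) := mul_le_mul ht10 ht10 ht0.le (by norm_num)
  have hden0 : (0:ℝ) < 1 - t*t := by linarith only [htt]
  have hfrac : |P * ε - Q| / |1 - ε| < 3*t := by
    rw [div_lt_iff₀ (lt_of_lt_of_le hden0 hden)]
    have ht2 : t*t ≤ (1/1024)*t := mul_le_mul_of_nonneg_right ht10 ht0.le
    calc |P * ε - Q| ≤ 2*(t*t) + 2*t := hnum
    _ ≤ 2*((1/1024)*t) + 2*t := by linarith only [ht2]
    _ < 3*t*(9/10) := by linarith only [ht0]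
    _ ≤ 3*t*(1-t*t) := mul_le_mul_of_nonneg_left (by linarith only [htt]) (by positivity)
    _ ≤ 3*t*|1 - ε| := mul_le_mul_of_nonneg_left hden (by positivity)
  have hτpos : 0 < |τ| := abs_pos.mpr hτ0
  calc |P * ε - Q| / |1 - ε| / |τ| < 3 * t / |τ| :=
        div_lt_div_of_pos_right hfrac hτpos
  _ = 3/(|τ| * 2^k) := by rw [ht]; field_simp
end

section
/- Let δ be a positive natural number and set α_δ = (δ − log₂|τ|)/φ. Define (T_δ^{-1})_{ij} for 1 ≤ i ≤ j ≤ n by (−1)^{i+j} (1/τ)(r_+^{i−j} − r_+^{−i−j}) if i < ⌈n/2⌉ and by (−1)^{i+j} (1/τ)(r_+^{i−j} − r_+^{−2(n+1)+i+j}) if i ≥ ⌈n/2⌉. Then for all 1 ≤ i ≤ j ≤ n with j − i > α_δ, it holds that |(T_δ^{-1})_{ij}| < 2^{−δ}; that is, T_δ^{-1} is a band matrix to precision 2^{−δ} with bandwidth at most α_δ, independent of n. -/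
lemma abs_zpow' (r : ℝ) (e : ℤ) : |r ^ e| = |r| ^ e := map_zpow₀ (absHom : ℝ →*₀ ℝ) r e

lemma aux_diff_bound (r : ℝ) (h : 1 < |r|) (e : ℤ) (k : ℕ) (hk : 1 ≤ k) :
    |r ^ e - r ^ (e - 2 * (k : ℤ))| ≤ |r| ^ e := by
  have hr0 : r ≠ 0 := by
    intro h0
    rw [h0, abs_zero] at h; linarith
  have h2 : 1 < r ^ 2 := by
    have := sq_abs r
    nlinarith
  set t : ℝ := (r ^ 2) ^ (-(k : ℤ) * 1) with ht
  have ht0 : 0 < t := zpow_pos (by linarith) _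
  have ht1 : t < 1 := by
    rw [ht]
    apply zpow_lt_one_of_neg₀ h2
    omega
  have hfac : r ^ (e - 2 * (k : ℤ)) = r ^ e * t := by
    rw [ht, ← zpow_natCast r 2, ← zpow_mul, ← zpow_add₀ hr0]
    ring_nf
  rw [hfac]
  have heq : r ^ e - r ^ e * t = r ^ e * (1 - t) := by ring
  rw [heq, abs_mul, abs_zpow']
  have h1t : |1 - t| ≤ 1 := by rw [abs_le]; constructor <;> linarith
  calc |r| ^ e * |1 - t| ≤ |r| ^ e * 1 :=
        mul_le_mul_of_nonneg_left h1t (zpow_nonneg (abs_nonneg r) _)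
    _ = |r| ^ e := by ring


/-- the approximate inverse `T_δ⁻¹` is a band matrix to precision `2^(-δ)`
with bandwidth at most `α_δ = (δ - log₂|τ|)/φ`, independently of `n`: every entry with
1-based indices `1 ≤ i ≤ j ≤ n` and `j - i > α_δ` has absolute value `< 2^(-δ)`. -/
theorem band_matrix_to_precision (a b : ℝ) (hb : b ≠ 0) (hab : 2 * |b| < |a|)
    (x : ℝ) (hx : x = a / (2 * b))
    (r : ℝ) (hroot : r ^ 2 - 2 * x * r + 1 = 0) (habs : 1 < |r|)
    (τ : ℝ) (hτdef : τ = b * (r - r⁻¹)) (hτ : τ ≠ 0)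
    (φ : ℝ) (hφ : φ = Real.logb 2 |r|)
    (δ : ℕ) (hδ : 1 ≤ δ) (α : ℝ) (hα : α = ((δ : ℝ) - Real.logb 2 |τ|) / φ) :
    ∀ n i j : ℕ, 1 ≤ n → 1 ≤ i → i ≤ j → j ≤ n → α < (j : ℝ) - (i : ℝ) →
      |if i < ⌈(n : ℝ) / 2⌉₊ then
          (-1 : ℝ) ^ (i + j) * (1 / τ) * (r ^ ((i : ℤ) - (j : ℤ)) - r ^ (-(i : ℤ) - (j : ℤ)))
        else
          (-1 : ℝ) ^ (i + j) * (1 / τ) *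
            (r ^ ((i : ℤ) - (j : ℤ)) - r ^ (-2 * ((n : ℤ) + 1) + (i : ℤ) + (j : ℤ)))|
        < (2 : ℝ) ^ (-(δ : ℤ)) := by
  intro n i j hn hi hij hjn hgap
  have hT : 0 < |τ| := abs_pos.mpr hτ
  have hφpos : 0 < φ := hφ ▸ Real.logb_pos one_lt_two habs
  set m : ℕ := j - i with hm
  have hmcast : (j : ℝ) - (i : ℝ) = (m : ℝ) := by
    rw [hm]; push_cast [Nat.cast_sub hij]; ring
  -- key bound: |r|^(i-j) < |τ| * 2^(-δ)
  have key : |r| ^ ((i : ℤ) - (j : ℤ)) < |τ| * (2 : ℝ) ^ (-(δ : ℤ)) := by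
    have h1 : (δ : ℝ) - Real.logb 2 |τ| < φ * m := by
      rw [hα, div_lt_iff₀ hφpos] at hgap
      rw [hmcast] at hgap
      linarith [hgap]
    have h2 : (δ : ℝ) < Real.logb 2 (|τ| * |r| ^ m) := by
      rw [Real.logb_mul (ne_of_gt hT) (by positivity), Real.logb_pow]
      rw [hφ] at h1
      linarith
    have h3 : (2 : ℝ) ^ (δ : ℕ) < |τ| * |r| ^ m := by
      have := (Real.lt_logb_iff_rpow_lt one_lt_two
        (by positivity : (0:ℝ) < |τ| * |r| ^ m)).mp h2
      rwa [Real.rpow_natCast] at this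
    have hije : ((i : ℤ) - (j : ℤ)) = -(m : ℤ) := by
      rw [hm]; push_cast [Nat.cast_sub hij]; ring
    rw [hije, zpow_neg, zpow_natCast, zpow_neg, zpow_natCast]
    have hRm : (0:ℝ) < |r| ^ m := by positivity
    have h2d : (0:ℝ) < (2:ℝ) ^ δ := by positivity
    rw [inv_lt_iff_one_lt_mul₀ hRm]
    rw [show |τ| * ((2:ℝ) ^ δ)⁻¹ * |r| ^ m = (|τ| * |r| ^ m) * ((2:ℝ)^δ)⁻¹ by ring,
      ← div_eq_mul_inv, lt_div_iff₀ h2d, one_mul]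
    exact h3
  -- bound the entry
  have habs1 : ∀ e2 : ℤ, ∀ k : ℕ, 1 ≤ k → e2 = (i : ℤ) - (j : ℤ) - 2 * k →
      |(-1 : ℝ) ^ (i + j) * (1 / τ) * (r ^ ((i : ℤ) - (j : ℤ)) - r ^ e2)|
        < (2 : ℝ) ^ (-(δ : ℤ)) := by
    intro e2 k hk he2
    rw [abs_mul, abs_mul, abs_pow, abs_neg, abs_one, one_pow, one_mul, abs_div, abs_one]
    subst he2
    have hb1 := aux_diff_bound r habs ((i : ℤ) - (j : ℤ)) k hk
    calc 1 / |τ| * |r ^ ((i : ℤ) - (j : ℤ)) - r ^ ((i : ℤ) - (j : ℤ) - 2 * k)|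
        ≤ 1 / |τ| * (|r| ^ ((i : ℤ) - (j : ℤ))) :=
          mul_le_mul_of_nonneg_left hb1 (by positivity)
      _ < 1 / |τ| * (|τ| * (2 : ℝ) ^ (-(δ : ℤ))) :=
          mul_lt_mul_of_pos_left key (by positivity)
      _ = (2 : ℝ) ^ (-(δ : ℤ)) := by field_simp
  split_ifs with hcase
  · exact habs1 (-(i : ℤ) - (j : ℤ)) i hi (by push_cast; ring)
  · refine habs1 (-2 * ((n : ℤ) + 1) + (i : ℤ) + (j : ℤ)) (n + 1 - j) (by omega) ?_
    push_cast [Nat.cast_sub (by omega : j ≤ n + 1)]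
    ring
end
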